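/- Let T : ℓ²(ℤ) → ℓ²(ℤ) be a bilateral weighted shift. Then T is hypercyclic if and only if T is recurrent. -/

import Mathlib

open Filter Topology

/-- An operator is hypercyclic if some vector has dense orbit. -/
def HypercyclicOp {X : Type*} [NormedAddCommGroup X] [NormedSpace ℂ X]
    (T : X →L[ℂ] X) : Prop :=
  ∃ x : X, Dense (Set.range fun n : ℕ => (T ^ n) x)

/-- Recurrence for an operator. -/
def RecurrentOp {X : Type*} [NormedAddCommGroup X] [NormedSpace ℂ X]
    (T : X →L[ℂ] X) : Prop :=
  ∀ U : Set X, IsOpen U → U.Nonempty →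
    ∃ k : ℕ, 0 < k ∧ (U ∩ (T ^ k : _ →L[ℂ] _) ⁻¹' U).Nonempty

noncomputable section Aux

abbrev Hsp : Type := lp (fun _ : ℤ => ℂ) 2

def evalC (j : ℤ) : Hsp →L[ℂ] ℂ :=
  LinearMap.mkContinuous
    { toFun := fun x => x j
      map_add' := fun x y => by simp [lp.coeFn_add]
      map_smul' := fun c x => by simp [lp.coeFn_smul] }
    1 (fun x => by change ‖x j‖ ≤ 1 * ‖x‖; simpa using lp.norm_apply_le_norm (by norm_num) x j)

@[simp] lemma evalC_apply (j : ℤ) (x : Hsp) : evalC j x = x j := rfl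

def Wn (w : ℤ → ℝ) (n : ℕ) (m : ℤ) : ℝ := ∏ i ∈ Finset.range n, w (m - i)

lemma Wn_pos (w : ℤ → ℝ) (hw : ∀ n, 0 < w n) (n : ℕ) (m : ℤ) : 0 < Wn w n m :=
  Finset.prod_pos fun i _ => hw _

lemma Wn_succ (w : ℤ → ℝ) (n : ℕ) (m : ℤ) : Wn w (n+1) m = w m * Wn w n (m-1) := by
  unfold Wn
  rw [Finset.prod_range_succ', mul_comm]
  congr 1
  · norm_num
  refine Finset.prod_congr rfl fun i _ => ?_
  congr 1
  push_cast
  ring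


lemma norm_single' (m : ℤ) (c : ℂ) : ‖lp.single (E := fun _ : ℤ => ℂ) 2 m c‖ = ‖c‖ := by
  have := lp.norm_single (p := 2) (E := fun _ : ℤ => ℂ) (by norm_num) m c
  simpa using this

lemma sum_single_apply (F : Finset ℤ) (c : ℤ → ℂ) (j : ℤ) :
    ((∑ i ∈ F, lp.single 2 i (c i) : Hsp) : ∀ _ : ℤ, ℂ) j = if j ∈ F then c j else 0 := by
  rw [lp.coeFn_sum]
  simp only [Finset.sum_apply]
  by_cases hj : j ∈ F
  · rw [if_pos hj]
    have h1 : ∀ i ∈ F, i ≠ j → (lp.single (E := fun _ : ℤ => ℂ) 2 i (c i) : ∀ _ : ℤ, ℂ) j = 0 :=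
      fun i _ hne => lp.single_apply_ne (E := fun _ : ℤ => ℂ) 2 i _ hne.symm
    rw [Finset.sum_eq_single_of_mem j hj h1, lp.single_apply_self]
  · rw [if_neg hj]
    exact Finset.sum_eq_zero fun i hi =>
      lp.single_apply_ne (E := fun _ : ℤ => ℂ) 2 i _ (fun h => hj (h ▸ hi))

lemma norm_sum_single_le (F : Finset ℤ) (σ : ℤ → ℤ) (a : ℤ → ℂ) :
    ‖(∑ i ∈ F, a i • lp.single 2 (σ i) (1:ℂ) : Hsp)‖ ≤ ∑ i ∈ F, ‖a i‖ := by
  refine (norm_sum_le _ _).trans (Finset.sum_le_sum fun i _ => ?_)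
  rw [norm_smul, norm_single']
  simp

lemma fin_approx (x : Hsp) (ε : ℝ) (hε : 0 < ε) :
    ∃ F : Finset ℤ, ‖x - ∑ i ∈ F, lp.single 2 i (x i)‖ < ε := by
  have h := lp.hasSum_single (E := fun _ : ℤ => ℂ) (p := 2) (by norm_num) x
  rw [HasSum, Metric.tendsto_nhds] at h
  have h2 := h ε hε
  rw [show (SummationFilter.unconditional ℤ).filter = atTop from rfl, Filter.eventually_atTop] at h2
  obtain ⟨F, hF⟩ := h2
  refine ⟨F, ?_⟩
  have := hF F le_rfl
  rw [dist_eq_norm, ← norm_neg] at this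
  simpa [neg_sub] using this

lemma recur_large {X : Type*} [NormedAddCommGroup X] [NormedSpace ℂ X]
    {T : X →L[ℂ] X} (h : ∀ U : Set X, IsOpen U → U.Nonempty →
      ∃ k : ℕ, 0 < k ∧ (U ∩ (T ^ k : _ →L[ℂ] _) ⁻¹' U).Nonempty)
    (U : Set X) (hU : IsOpen U) (hne : U.Nonempty) (N : ℕ) :
    ∃ k : ℕ, N < k ∧ (U ∩ (T ^ k : _ →L[ℂ] _) ⁻¹' U).Nonempty := by
  induction N with
  | zero => exact h U hU hne
  | succ N ih =>
    obtain ⟨k, hk, hne'⟩ := ih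
    set V := U ∩ (T ^ k : _ →L[ℂ] _) ⁻¹' U with hV
    have hVopen : IsOpen V := hU.inter (hU.preimage (T ^ k).continuous)
    obtain ⟨k', hk', ⟨z, hz1, hz2⟩⟩ := h V hVopen hne'
    refine ⟨k + k', by omega, ⟨z, hz1.1, ?_⟩⟩
    have hz3 : (T ^ k') z ∈ V := hz2
    have : (T ^ (k + k')) z = (T ^ k) ((T ^ k') z) := by
      rw [pow_add, ContinuousLinearMap.mul_apply]
    rw [Set.mem_preimage, this]; exact hz3.2

section PowLemmas

variable (w : ℤ → ℝ) (T : Hsp →L[ℂ] Hsp)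
  (hT : ∀ n : ℤ, T (lp.single 2 n (1 : ℂ)) = (w n : ℂ) • lp.single 2 (n - 1) (1 : ℂ))
include hT

lemma pow_single (n : ℕ) (m : ℤ) :
    (T ^ n) (lp.single 2 m (1:ℂ)) = (Wn w n m : ℂ) • lp.single 2 (m - n) (1:ℂ) := by
  induction n generalizing m with
  | zero => simp [Wn]
  | succ n ih =>
    rw [pow_succ, ContinuousLinearMap.mul_apply, hT, map_smul, ih]
    rw [smul_smul, Wn_succ]
    have : (m : ℤ) - 1 - n = m - (n+1 : ℕ) := by push_cast; ring
    rw [this]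
    push_cast
    ring_nf

lemma pow_single_c (n : ℕ) (m : ℤ) (c : ℂ) :
    (T ^ n) (lp.single 2 m c) = (c * (Wn w n m : ℂ)) • lp.single 2 (m - n) (1:ℂ) := by
  have h1 : lp.single (E := fun _ : ℤ => ℂ) 2 m c = c • lp.single 2 m (1:ℂ) := by
    rw [← lp.single_smul (E := fun _ : ℤ => ℂ) 2 m c (1:ℂ), smul_eq_mul, mul_one]
  rw [h1, map_smul, pow_single w T hT, smul_smul]

lemma pow_coord (n : ℕ) (y : Hsp) (j : ℤ) :
    ((T ^ n) y) j = (Wn w n (j + n) : ℂ) * y (j + n) := by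
  have hs : HasSum (fun m : ℤ => ((evalC j).comp (T ^ n)) (lp.single 2 m (y m)))
      (((evalC j).comp (T ^ n)) y) :=
    (lp.hasSum_single (by norm_num) y).mapL _
  have hg : ∀ m : ℤ, ((evalC j).comp (T ^ n)) (lp.single 2 m (y m)) =
      if m = j + n then (Wn w n (j + n) : ℂ) * y (j + n) else 0 := by
    intro m
    rw [ContinuousLinearMap.comp_apply, pow_single_c w T hT, map_smul, evalC_apply]
    by_cases h : m = j + n
    · subst h
      rw [if_pos rfl]
      have : (j + (n:ℤ)) - n = j := by ring
      rw [this, lp.single_apply_self]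
      simp [mul_comm]
    · rw [if_neg h]
      have hj : j ≠ m - n := by omega
      rw [lp.single_apply_ne _ _ _ hj]
      simp
  have h0 : ∀ m : ℤ, m ≠ j + n → ((evalC j).comp (T ^ n)) (lp.single 2 m (y m)) = 0 := by
    intro m hm; rw [hg m, if_neg hm]
  have := hs.unique (hasSum_single (j + n) h0)
  rw [hg (j + n), if_pos rfl] at this
  simpa using this


end PowLemmas


lemma weight_est (w : ℤ → ℝ) (hw_pos : ∀ n, 0 < w n) (T : Hsp →L[ℂ] Hsp)
    (hT : ∀ n : ℤ, T (lp.single 2 n (1 : ℂ)) = (w n : ℂ) • lp.single 2 (n - 1) (1 : ℂ))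
    (hrec : RecurrentOp T) (q : ℕ) (δ : ℝ) (hδ : 0 < δ) (hδ1 : δ < 1) :
    ∃ n : ℕ, 2*q < n ∧ (∀ j : ℤ, |j| ≤ (q:ℤ) → (1-δ)/δ ≤ Wn w n (j + n)) ∧
      (∀ j : ℤ, |j| ≤ (q:ℤ) → Wn w n j ≤ δ/(1-δ)) := by
  set x : Hsp := ∑ i ∈ Finset.Icc (-(q:ℤ)) q, lp.single 2 i (1:ℂ) with hxdef
  have hx : ∀ j : ℤ, (x : ∀ _ : ℤ, ℂ) j = if |j| ≤ (q:ℤ) then 1 else 0 := by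
    intro j
    rw [hxdef, sum_single_apply]
    congr 1
    simp [Finset.mem_Icc, abs_le]
  obtain ⟨n, hn, ⟨y, hyU, hyP⟩⟩ := recur_large hrec (Metric.ball x δ) Metric.isOpen_ball
    ⟨x, Metric.mem_ball_self hδ⟩ (2*q)
  have hyc : ∀ j : ℤ, ‖y j - x j‖ < δ := by
    intro j
    have h1 : ‖(y - x : Hsp) j‖ ≤ ‖y - x‖ := lp.norm_apply_le_norm (by norm_num) _ j
    have h2 : ‖y - x‖ < δ := by rw [← dist_eq_norm]; exact hyU
    have h3 : (y - x : Hsp) j = y j - x j := by rw [lp.coeFn_sub]; rfl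
    rw [h3] at h1; linarith
  have hTc : ∀ j : ℤ, ‖((T ^ n) y) j - x j‖ < δ := by
    intro j
    have hyP' : dist ((T ^ n) y) x < δ := hyP
    have h1 : ‖((T ^ n) y - x : Hsp) j‖ ≤ ‖(T ^ n) y - x‖ := lp.norm_apply_le_norm (by norm_num) _ j
    have h2 : ‖(T ^ n) y - x‖ < δ := by rw [← dist_eq_norm]; exact hyP'
    have h3 : ((T ^ n) y - x : Hsp) j = ((T ^ n) y) j - x j := by rw [lp.coeFn_sub]; rfl
    rw [h3] at h1; linarith
  have hnz : (2*(q:ℤ)) < (n:ℤ) := by exact_mod_cast hn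
  refine ⟨n, hn, ?_, ?_⟩
  · intro j hjq
    rw [abs_le] at hjq
    have hxj : (x : ∀ _ : ℤ, ℂ) j = 1 := by rw [hx j, if_pos (abs_le.2 hjq)]
    have hxjn : (x : ∀ _ : ℤ, ℂ) (j + n) = 0 := by
      rw [hx (j + n), if_neg]
      rw [not_le]
      have h1 : (q:ℤ) < j + n := by omega
      exact lt_of_lt_of_le h1 (le_abs_self _)
    have hTn : ((T ^ n) y) j = (Wn w n (j + n) : ℂ) * y (j + n) := pow_coord w T hT n y j
    have h1 : ‖((T ^ n) y) j‖ > 1 - δ := by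
      have h2 := hTc j
      rw [hxj] at h2
      have h3 := norm_sub_norm_le (1:ℂ) (((T ^ n) y) j)
      rw [norm_sub_rev, norm_one] at h3
      linarith
    have h4 : ‖y (j + n)‖ < δ := by
      have h5 := hyc (j + n)
      rw [hxjn, sub_zero] at h5
      exact h5
    have hWpos := Wn_pos w hw_pos n (j + n)
    have h6 : ‖((T ^ n) y) j‖ = Wn w n (j + n) * ‖y (j + n)‖ := by
      rw [hTn, norm_mul, Complex.norm_real, Real.norm_eq_abs, abs_of_pos hWpos]
    rw [div_le_iff₀ hδ]
    have h7 : Wn w n (j + n) * ‖y (j + n)‖ ≤ Wn w n (j + n) * δ :=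
      mul_le_mul_of_nonneg_left h4.le hWpos.le
    rw [h6] at h1
    linarith
  · intro j hjq
    rw [abs_le] at hjq
    have hxj : (x : ∀ _ : ℤ, ℂ) j = 1 := by rw [hx j, if_pos (abs_le.2 hjq)]
    have hxjn : (x : ∀ _ : ℤ, ℂ) (j - n) = 0 := by
      rw [hx (j - n), if_neg]
      rw [not_le]
      have h1 : (q:ℤ) < -(j - n) := by omega
      exact lt_of_lt_of_le h1 (neg_le_abs _)
    have h1 : ‖y j‖ ≥ 1 - δ := by
      have h2 := hyc j
      rw [hxj] at h2
      have h3 := norm_sub_norm_le (1:ℂ) (y j)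
      rw [norm_sub_rev, norm_one] at h3
      linarith
    have hTn : ((T ^ n) y) (j - n) = (Wn w n j : ℂ) * y j := by
      have h0 := pow_coord w T hT n y (j - n)
      have hj' : j - (n:ℤ) + n = j := by ring
      rw [hj'] at h0
      exact h0
    have h4 : ‖((T ^ n) y) (j - n)‖ < δ := by
      have h5 := hTc (j - n)
      rw [hxjn, sub_zero] at h5
      exact h5
    have hWpos := Wn_pos w hw_pos n j
    have h6 : ‖((T ^ n) y) (j - n)‖ = Wn w n j * ‖y j‖ := by
      rw [hTn, norm_mul, Complex.norm_real, Real.norm_eq_abs, abs_of_pos hWpos]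
    rw [le_div_iff₀ (by linarith : (0:ℝ) < 1 - δ)]
    have h7 : Wn w n j * (1 - δ) ≤ Wn w n j * ‖y j‖ :=
      mul_le_mul_of_nonneg_left h1 hWpos.le
    rw [h6] at h4
    linarith

lemma arith_helper (A B ε δ : ℝ) (hA : 0 ≤ A) (hB : 0 ≤ B) (hδpos : 0 < δ)
    (hδhalf : δ ≤ 1/2) (hδsmall : δ*(8*(A+B+1)) ≤ ε) : A * (δ/(1-δ)) ≤ ε/4 := by
  have h1δ : 0 < 1-δ := by linarith
  have hK : δ/(1-δ) ≤ 2*δ := by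
    rw [div_le_iff₀ h1δ]
    nlinarith
  have h2 := mul_le_mul_of_nonneg_left hK hA
  nlinarith


lemma shift_transitive (w : ℤ → ℝ) (hw_pos : ∀ n, 0 < w n) (T : Hsp →L[ℂ] Hsp)
    (hT : ∀ n : ℤ, T (lp.single 2 n (1 : ℂ)) = (w n : ℂ) • lp.single 2 (n - 1) (1 : ℂ))
    (hrec : RecurrentOp T) (U V : Set Hsp) (hU : IsOpen U) (hV : IsOpen V)
    (hUne : U.Nonempty) (hVne : V.Nonempty) :
    ∃ n : ℕ, (U ∩ (T ^ n : _ →L[ℂ] _) ⁻¹' V).Nonempty := by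
  obtain ⟨u₀, hu₀⟩ := hUne
  obtain ⟨v₀, hv₀⟩ := hVne
  obtain ⟨ε₁, hε₁, hball₁⟩ := Metric.isOpen_iff.1 hU u₀ hu₀
  obtain ⟨ε₂, hε₂, hball₂⟩ := Metric.isOpen_iff.1 hV v₀ hv₀
  set ε := min ε₁ ε₂ with hεdef
  have hε : 0 < ε := lt_min hε₁ hε₂
  obtain ⟨F, hF⟩ := fin_approx u₀ (ε/4) (by linarith)
  obtain ⟨G, hG⟩ := fin_approx v₀ (ε/4) (by linarith)
  set u : Hsp := ∑ i ∈ F, lp.single 2 i (u₀ i) with hudef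
  set v : Hsp := ∑ i ∈ G, lp.single 2 i (v₀ i) with hvdef
  set q : ℕ := (F ∪ G).sup (fun i => i.natAbs) with hqdef
  have hq : ∀ i ∈ F ∪ G, |i| ≤ (q:ℤ) := by
    intro i hi
    rw [Int.abs_eq_natAbs]
    exact_mod_cast Finset.le_sup (f := fun i : ℤ => i.natAbs) hi
  set A : ℝ := ∑ i ∈ F, ‖u₀ i‖ with hAdef
  set B : ℝ := ∑ i ∈ G, ‖v₀ i‖ with hBdef
  have hA : 0 ≤ A := Finset.sum_nonneg fun i _ => norm_nonneg _
  have hB : 0 ≤ B := Finset.sum_nonneg fun i _ => norm_nonneg _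
  set δ : ℝ := min (ε/(8*(A+B+1))) (1/2) with hδdef
  have hδpos : 0 < δ := lt_min (by positivity) (by norm_num)
  have hδhalf : δ ≤ 1/2 := min_le_right _ _
  have hδ1 : δ < 1 := by linarith
  have h1δ : 0 < 1 - δ := by linarith
  have hδε : δ ≤ ε/(8*(A+B+1)) := min_le_left _ _
  set K : ℝ := δ/(1-δ) with hKdef
  have hK0 : 0 < K := div_pos hδpos h1δ
  have hδsmall : δ * (8*(A+B+1)) ≤ ε := by
    rw [← le_div_iff₀ (by positivity)]
    exact hδε
  have hKA : A * K ≤ ε/4 := by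
    rw [hKdef]
    exact arith_helper A B ε δ hA hB hδpos hδhalf hδsmall
  have hKB : B * K ≤ ε/4 := by
    rw [hKdef]
    exact arith_helper B A ε δ hB hA hδpos hδhalf (by linarith)
  obtain ⟨n, hn, hfwd, hbwd⟩ := weight_est w hw_pos T hT hrec q δ hδpos hδ1
  set s : Hsp := ∑ i ∈ G, (v₀ i / (Wn w n (i+n) : ℂ)) • lp.single 2 (i+n) (1:ℂ) with hsdef
  set z : Hsp := u + s with hzdef
  -- norm of s
  have hWfwd : ∀ i ∈ G, (1-δ)/δ ≤ Wn w n (i + n) :=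
    fun i hi => hfwd i (hq i (Finset.mem_union_right _ hi))
  have hWbwd : ∀ i ∈ F, Wn w n i ≤ K :=
    fun i hi => hbwd i (hq i (Finset.mem_union_left _ hi))
  have hsnorm : ‖s‖ ≤ B * K := by
    refine (norm_sum_single_le G (fun i => i + n) _).trans ?_
    rw [hBdef, Finset.sum_mul]
    refine Finset.sum_le_sum fun i hi => ?_
    have hWpos := Wn_pos w hw_pos n (i + n)
    rw [norm_div, Complex.norm_real, Real.norm_eq_abs, abs_of_pos hWpos]
    rw [div_le_iff₀ hWpos]
    have h2 : K * ((1-δ)/δ) ≤ K * Wn w n (i + n) :=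
      mul_le_mul_of_nonneg_left (hWfwd i hi) hK0.le
    have h3 : K * ((1-δ)/δ) = 1 := by
      rw [hKdef]; field_simp
    calc ‖v₀ i‖ = ‖v₀ i‖ * (K * ((1-δ)/δ)) := by rw [h3, mul_one]
      _ ≤ ‖v₀ i‖ * (K * Wn w n (i + n)) :=
          mul_le_mul_of_nonneg_left h2 (norm_nonneg _)
      _ = ‖v₀ i‖ * K * Wn w n (i + n) := by ring
  -- T^n u
  have hTnu : (T ^ n) u = ∑ i ∈ F, ((u₀ i) * (Wn w n i : ℂ)) • lp.single 2 (i - n) (1:ℂ) := by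
    rw [hudef, map_sum]
    exact Finset.sum_congr rfl fun i _ => pow_single_c w T hT n i (u₀ i)
  have hTnunorm : ‖(T ^ n) u‖ ≤ A * K := by
    rw [hTnu]
    refine (norm_sum_single_le F (fun i => i - n) _).trans ?_
    rw [hAdef, Finset.sum_mul]
    refine Finset.sum_le_sum fun i hi => ?_
    have hWpos := Wn_pos w hw_pos n i
    rw [norm_mul, Complex.norm_real, Real.norm_eq_abs, abs_of_pos hWpos]
    exact mul_le_mul_of_nonneg_left (hWbwd i hi) (norm_nonneg _)
  -- T^n s = v
  have hTns : (T ^ n) s = v := by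
    rw [hsdef, map_sum, hvdef]
    refine Finset.sum_congr rfl fun i _ => ?_
    rw [map_smul, pow_single w T hT n (i + n), smul_smul]
    have hWpos := Wn_pos w hw_pos n (i + n)
    have hne : ((Wn w n (i+n) : ℝ) : ℂ) ≠ 0 := by
      exact_mod_cast hWpos.ne'
    rw [div_mul_cancel₀ _ hne]
    have hidx : i + (n:ℤ) - n = i := by ring
    rw [hidx]
    rw [← lp.single_smul (E := fun _ : ℤ => ℂ) 2 i (v₀ i) (1:ℂ), smul_eq_mul, mul_one]
  -- memberships
  have hzU : z ∈ U := by
    apply hball₁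
    rw [Metric.mem_ball, dist_eq_norm]
    have h1 : z - u₀ = (u - u₀) + s := by rw [hzdef]; abel
    rw [h1]
    have h2 : ‖u - u₀‖ < ε/4 := by rw [norm_sub_rev]; exact hF
    have := norm_add_le (u - u₀) s
    have hεle : ε ≤ ε₁ := min_le_left _ _
    calc ‖(u - u₀) + s‖ ≤ ‖u - u₀‖ + ‖s‖ := norm_add_le _ _
      _ < ε/4 + (ε/4) := by
          apply add_lt_add_of_lt_of_le h2
          linarith
      _ ≤ ε₁ := by linarith
  have hzV : (T ^ n) z ∈ V := by
    apply hball₂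
    rw [Metric.mem_ball, dist_eq_norm]
    have h1 : (T ^ n) z = (T ^ n) u + v := by rw [hzdef, map_add, hTns]
    have h2 : (T ^ n) z - v₀ = (T ^ n) u + (v - v₀) := by rw [h1]; abel
    rw [h2]
    have h3 : ‖v - v₀‖ < ε/4 := by rw [norm_sub_rev]; exact hG
    have hεle : ε ≤ ε₂ := min_le_right _ _
    calc ‖(T ^ n) u + (v - v₀)‖ ≤ ‖(T ^ n) u‖ + ‖v - v₀‖ := norm_add_le _ _
      _ < ε/4 + (ε/4 + 0) := by
          apply add_lt_add_of_le_of_lt (by linarith)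
          linarith
      _ ≤ ε₂ := by linarith
  exact ⟨n, z, hzU, hzV⟩

lemma single_eq_smul (i : ℤ) (a : ℂ) :
    lp.single (E := fun _ : ℤ => ℂ) 2 i a = a • lp.single 2 i (1:ℂ) := by
  rw [← lp.single_smul (E := fun _ : ℤ => ℂ) 2 i a (1:ℂ), smul_eq_mul, mul_one]

instance : Nontrivial Hsp := by
  refine ⟨lp.single 2 0 (1:ℂ), 0, fun h => ?_⟩
  have h0 : (lp.single (E := fun _ : ℤ => ℂ) 2 0 (1:ℂ) : ∀ _ : ℤ, ℂ) 0 = 1 :=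
    lp.single_apply_self (E := fun _ : ℤ => ℂ) 2 (0:ℤ) (1:ℂ)
  rw [h] at h0
  simp at h0

lemma countable_dense_subset : ∃ D : Set Hsp, D.Countable ∧ Dense D := by
  obtain ⟨D₀, hD₀c, hD₀d⟩ := TopologicalSpace.exists_countable_dense ℂ
  haveI := hD₀c.to_subtype
  refine ⟨⋃ F : Finset ℤ, Set.range (fun c : (F → D₀) =>
      (∑ i ∈ F.attach, lp.single 2 (i:ℤ) ((c i : ℂ)) : Hsp)), ?_, ?_⟩
  · exact Set.countable_iUnion fun F => Set.countable_range _
  · rw [Metric.dense_iff]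
    intro x r hr
    obtain ⟨F, hF⟩ := fin_approx x (r/2) (by linarith)
    have hstep : ∀ i : ℤ, ∃ b ∈ D₀, dist (x i) b < r/(2*(F.card+1)) := fun i =>
      Metric.mem_closure_iff.1 (hD₀d (x i)) _ (by positivity)
    choose d hd1 hd2 using hstep
    set c : (F → D₀) := fun i => ⟨d i, hd1 i⟩ with hcdef
    set y : Hsp := ∑ i ∈ F.attach, lp.single 2 (i:ℤ) ((c i : ℂ)) with hydef
    refine ⟨y, ?_, Set.mem_iUnion.2 ⟨F, ⟨c, rfl⟩⟩⟩
    rw [Metric.mem_ball, dist_comm, dist_eq_norm]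
    have hy : y = ∑ i ∈ F, lp.single 2 i (d i) := by
      rw [hydef]
      exact Finset.sum_attach F (fun i => lp.single 2 i (d i))
    have hsplit : x - y = (x - ∑ i ∈ F, lp.single 2 i (x i)) +
        (∑ i ∈ F, lp.single 2 i (x i) - y) := by abel
    have hdiff : ‖(∑ i ∈ F, lp.single 2 i (x i) : Hsp) - y‖ ≤ F.card * (r/(2*(F.card+1))) := by
      rw [hy, ← Finset.sum_sub_distrib]
      have heach : ∀ i ∈ F, ‖lp.single (E := fun _ : ℤ => ℂ) 2 i (x i) - lp.single 2 i (d i)‖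
          ≤ r/(2*(F.card+1)) := by
        intro i _
        rw [single_eq_smul i (x i), single_eq_smul i (d i), ← sub_smul]
        rw [norm_smul, norm_single']
        have : ‖x i - d i‖ < r/(2*(F.card+1)) := by
          rw [← dist_eq_norm]; exact hd2 i
        simpa using this.le
      calc ‖∑ i ∈ F, (lp.single (E := fun _ : ℤ => ℂ) 2 i (x i) - lp.single 2 i (d i))‖
          ≤ ∑ i ∈ F, ‖lp.single (E := fun _ : ℤ => ℂ) 2 i (x i) - lp.single 2 i (d i)‖ :=
            norm_sum_le _ _
        _ ≤ ∑ _i ∈ F, r/(2*(F.card+1)) := Finset.sum_le_sum heach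
        _ = F.card * (r/(2*(F.card+1))) := by rw [Finset.sum_const, nsmul_eq_mul]
    have hcard : (F.card : ℝ) * (r/(2*(F.card+1))) ≤ r/2 := by
      have h2 : (0:ℝ) < 2*((F.card:ℝ)+1) := by positivity
      have h3 : (F.card:ℝ) / (2*((F.card:ℝ)+1)) ≤ 1/2 := by
        rw [div_le_div_iff₀ h2 (by norm_num)]
        nlinarith [Nat.cast_nonneg (α := ℝ) F.card]
      calc (F.card:ℝ) * (r/(2*((F.card:ℝ)+1))) = ((F.card:ℝ)/(2*((F.card:ℝ)+1))) * r := by ring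
        _ ≤ (1/2)*r := mul_le_mul_of_nonneg_right h3 hr.le
        _ = r/2 := by ring
    calc ‖x - y‖ = ‖(x - ∑ i ∈ F, lp.single 2 i (x i)) + (∑ i ∈ F, lp.single 2 i (x i) - y)‖ := by
          rw [← hsplit]
      _ ≤ ‖x - ∑ i ∈ F, lp.single 2 i (x i)‖ + ‖(∑ i ∈ F, lp.single 2 i (x i) : Hsp) - y‖ :=
          norm_add_le _ _
      _ < r/2 + r/2 := add_lt_add_of_lt_of_le hF (hdiff.trans hcard)
      _ = r := by ring

lemma birkhoff (T : Hsp →L[ℂ] Hsp)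
    (htrans : ∀ U V : Set Hsp, IsOpen U → IsOpen V → U.Nonempty → V.Nonempty →
      ∃ n : ℕ, (U ∩ (T ^ n : _ →L[ℂ] _) ⁻¹' V).Nonempty) :
    ∃ x : Hsp, Dense (Set.range fun n : ℕ => (T ^ n) x) := by
  obtain ⟨D, hDc, hDd⟩ := countable_dense_subset
  haveI := hDc.to_subtype
  set G : D × ℕ → Set Hsp := fun p =>
    ⋃ n : ℕ, (T ^ n : _ →L[ℂ] _) ⁻¹' Metric.ball (p.1 : Hsp) (1/(p.2+1)) with hGdef
  have hGopen : ∀ p, IsOpen (G p) := fun p =>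
    isOpen_iUnion fun n => Metric.isOpen_ball.preimage (T ^ n).continuous
  have hGdense : ∀ p, Dense (G p) := by
    intro p
    rw [dense_iff_inter_open]
    intro W hW hWne
    have hrpos : (0:ℝ) < 1/((p.2:ℝ)+1) := by positivity
    have hballne : (Metric.ball (p.1 : Hsp) (1/(p.2+1))).Nonempty :=
      ⟨_, Metric.mem_ball_self hrpos⟩
    obtain ⟨n, z, hz1, hz2⟩ := htrans W _ hW Metric.isOpen_ball hWne hballne
    exact ⟨z, hz1, Set.mem_iUnion.2 ⟨n, hz2⟩⟩
  have hBaire : Dense (⋂ p, G p) := dense_iInter_of_isOpen hGopen hGdense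
  obtain ⟨x, hx⟩ := hBaire.nonempty
  refine ⟨x, Metric.dense_iff.2 fun y r hr => ?_⟩
  obtain ⟨d, hdD, hdy⟩ := Metric.mem_closure_iff.1 (hDd y) (r/2) (by linarith)
  obtain ⟨m, hm⟩ := exists_nat_one_div_lt (show (0:ℝ) < r/2 by linarith)
  obtain ⟨n, hn⟩ := Set.mem_iUnion.1 (Set.mem_iInter.1 hx (⟨d, hdD⟩, m))
  refine ⟨(T ^ n) x, ?_, Set.mem_range_self n⟩
  rw [Metric.mem_ball]
  have h1 : dist ((T ^ n) x) d < 1/((m:ℝ)+1) := hn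
  calc dist ((T ^ n) x) y ≤ dist ((T ^ n) x) d + dist d y := dist_triangle _ _ _
    _ < 1/((m:ℝ)+1) + r/2 := by
        apply add_lt_add h1
        rw [dist_comm]
        exact hdy
    _ < r/2 + r/2 := by linarith
    _ = r := by ring

lemma hyp_to_rec (T : Hsp →L[ℂ] Hsp)
    (h : ∃ x : Hsp, Dense (Set.range fun n : ℕ => (T ^ n) x)) :
    ∀ U : Set Hsp, IsOpen U → U.Nonempty →
      ∃ k : ℕ, 0 < k ∧ (U ∩ (T ^ k : _ →L[ℂ] _) ⁻¹' U).Nonempty := by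
  obtain ⟨x, hx⟩ := h
  intro U hU hUne
  haveI : ∀ p : Hsp, NeBot (𝓝[≠] p) := fun p => Module.punctured_nhds_neBot ℂ Hsp p
  set f : ℕ → Hsp := fun n => (T ^ n) x with hfdef
  obtain ⟨z, hzU, n, hn⟩ := dense_iff_inter_open.1 hx U hU hUne
  have hfin : (f '' Set.Iic n).Finite := (Set.finite_Iic n).image f
  have hdense2 : Dense (Set.range f \ (f '' Set.Iic n)) := hx.diff_finite hfin
  obtain ⟨z', hz'U, hz'r, hz'ni⟩ := dense_iff_inter_open.1 hdense2 U hU hUne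
  obtain ⟨m, hm⟩ := hz'r
  have hnm : n < m := by
    by_contra hc
    exact hz'ni ⟨m, Set.mem_Iic.2 (by omega), hm⟩
  refine ⟨m - n, by omega, f n, hn ▸ hzU, ?_⟩
  have hkey : (T ^ (m - n)) (f n) = f m := by
    rw [hfdef]
    have h2 : (T ^ (m - n)) ((T ^ n) x) = (T ^ (m - n) * T ^ n) x := rfl
    have hmn : m - n + n = m := by omega
    rw [h2, ← pow_add, hmn]
  rw [Set.mem_preimage, hkey, hm]
  exact hz'U

end Aux

theorem stmt9
    (w : ℤ → ℝ) (hw_pos : ∀ n : ℤ, 0 < w n) (hw_bdd : ∃ C : ℝ, ∀ n : ℤ, w n ≤ C)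
    (T : lp (fun _ : ℤ => ℂ) 2 →L[ℂ] lp (fun _ : ℤ => ℂ) 2)
    (hT : ∀ n : ℤ, T (lp.single 2 n (1 : ℂ)) = (w n : ℂ) • lp.single 2 (n - 1) (1 : ℂ)) :
    HypercyclicOp T ↔ RecurrentOp T := by
  constructor
  · intro h
    exact hyp_to_rec T h
  · intro hrec
    exact birkhoff T (fun U V hU hV hUne hVne =>
      shift_transitive w hw_pos T hT hrec U V hU hV hUne hVne)
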